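/- arXiv:1910.11203 — 3 statements merged into one kernel-verified Lean document; each statement's English description precedes it below -/
import Mathlib

section
/- Let (Ω, P) be a probability space with event A and finite nonempty pairwise-disjoint index sets L₁, L₂, L₃ with events Bᵢ (i ∈ L₁ ∪ L₂ ∪ L₃), such that A together with all Bᵢ is a mutually independent family. Then P(A ∪ ((⋃_{i∈L₁} Bᵢ) ∩ (⋃_{i∈L₂} Bᵢ)) ∪ ⋃_{i∈L₃} Bᵢ) = 1 - (1 - P(A)) · (1 - (1 - ∏_{i∈L₁}(1 - P(Bᵢ))) · (1 - ∏_{i∈L₂}(1 - P(Bᵢ)))) · ∏_{i∈L₃}(1 - P(Bᵢ)). -/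
/-! Pass to the complement: the system survives iff `A` survives, the destination switches all
survive, and at least one of the two paths survives entirely. Complements of independent
events are independent, so the two path events have survival probability
`(1 - P A) * ∏_{L₁ ∪ L₃} (1 - P Bᵢ)` and `(1 - P A) * ∏_{L₂ ∪ L₃} (1 - P Bᵢ)`, and their
intersection that of `L₁ ∪ L₂ ∪ L₃`; inclusion–exclusion gives the formula. -/

open MeasureTheory Finset

section ProductFormula

variable {Ω ι : Type*} [MeasurableSpace Ω] {μ : Measure Ω} [IsFiniteMeasure μ]

theorem measureReal_compl_inter_eq_sub {A : Set Ω} (hA : MeasurableSet A) (X : Set Ω) :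
    μ.real (Aᶜ ∩ X) = μ.real X - μ.real (A ∩ X) := by
  rw [← measureReal_sdiff_add_inter (μ := μ) (s := X) hA, Set.sdiff_eq, Set.inter_comm X,
    Set.inter_comm X, add_sub_cancel_right]

theorem measureReal_inter_biInter_compl {s : ι → Set Ω} (L : Finset ι)
    (hs : ∀ i ∈ L, MeasurableSet (s i)) (C : Set Ω) (c : ℝ)
    (h : ∀ T ⊆ L, μ.real (C ∩ ⋂ i ∈ T, s i) = c * ∏ i ∈ T, μ.real (s i)) :
    μ.real (C ∩ ⋂ i ∈ L, (s i)ᶜ) = c * ∏ i ∈ L, (1 - μ.real (s i)) := by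
  classical
  induction L using Finset.induction_on generalizing C c with
  | empty => simpa using h ∅ subset_rfl
  | @insert j L hj ih =>
    have hL : L ⊆ insert j L := subset_insert j L
    have hC := ih (fun i hi => hs i (hL hi)) C c fun T hT => h T (hT.trans hL)
    -- Generalizing over `C` lets the induction absorb `s j` into the base event.
    have hCj := ih (fun i hi => hs i (hL hi)) (C ∩ s j) (c * μ.real (s j)) fun T hT => by
      rw [Set.inter_assoc, ← set_biInter_insert, h _ (insert_subset_insert j hT),
        prod_insert fun hjT => hj (hT hjT), mul_assoc]
    have hsplit : C ∩ ⋂ i ∈ insert j L, (s i)ᶜ = (s j)ᶜ ∩ (C ∩ ⋂ i ∈ L, (s i)ᶜ) := by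
      rw [set_biInter_insert]
      ac_rfl
    have hinter : s j ∩ (C ∩ ⋂ i ∈ L, (s i)ᶜ) = C ∩ s j ∩ ⋂ i ∈ L, (s i)ᶜ := by
      ac_rfl
    rw [hsplit, measureReal_compl_inter_eq_sub (hs j (mem_insert_self j L)), hinter, hC, hCj,
      prod_insert hj]
    ring

theorem measureReal_compl_inter_biInter_compl {A : Set Ω} (hA : MeasurableSet A)
    {s : ι → Set Ω} (L : Finset ι) (hs : ∀ i ∈ L, MeasurableSet (s i))
    (hsL : ∀ T ⊆ L, μ.real (⋂ i ∈ T, s i) = ∏ i ∈ T, μ.real (s i))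
    (hAL : ∀ T ⊆ L, μ.real (A ∩ ⋂ i ∈ T, s i) = μ.real A * ∏ i ∈ T, μ.real (s i)) :
    μ.real (Aᶜ ∩ ⋂ i ∈ L, (s i)ᶜ) = (1 - μ.real A) * ∏ i ∈ L, (1 - μ.real (s i)) :=
  measureReal_inter_biInter_compl L hs Aᶜ _ fun T hT => by
    rw [measureReal_compl_inter_eq_sub hA, hsL T hT, hAL T hT]
    ring

end ProductFormula

theorem stmt_9_general {Ω ι : Type*} [MeasurableSpace Ω] [DecidableEq ι]
    (P : Measure Ω) [IsProbabilityMeasure P]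
    (A : Set Ω) (hA : MeasurableSet A)
    (L1 L2 L3 : Finset ι)
    (h12 : Disjoint L1 L2) (h13 : Disjoint L1 L3) (h23 : Disjoint L2 L3)
    (B : ι → Set Ω) (hB : ∀ i ∈ L1 ∪ L2 ∪ L3, MeasurableSet (B i))
    (hindep : ∀ (TA : Finset Unit), ∀ T ⊆ L1 ∪ L2 ∪ L3,
      (P ((⋂ _x ∈ TA, A) ∩ ⋂ i ∈ T, B i)).toReal =
        (∏ _x ∈ TA, (P A).toReal) * ∏ i ∈ T, (P (B i)).toReal) :
    (P (A ∪ ((⋃ i ∈ L1, B i) ∩ ⋃ i ∈ L2, B i) ∪ ⋃ i ∈ L3, B i)).toReal =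
      1 - (1 - (P A).toReal) *
        (1 - (1 - ∏ i ∈ L1, (1 - (P (B i)).toReal)) *
             (1 - ∏ i ∈ L2, (1 - (P (B i)).toReal))) *
        ∏ i ∈ L3, (1 - (P (B i)).toReal) := by
  simp only [← measureReal_def] at hindep ⊢
  set L := L1 ∪ L2 ∪ L3
  set V : Finset ι → Set Ω := fun T => Aᶜ ∩ ⋂ i ∈ T, (B i)ᶜ
  have hV : ∀ T ⊆ L, P.real (V T) = (1 - P.real A) * ∏ i ∈ T, (1 - P.real (B i)) :=
    fun T hT => measureReal_compl_inter_biInter_compl hA T (fun i hi => hB i (hT hi))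
      (fun T' hT' => by simpa using hindep ∅ T' (hT'.trans hT))
      (fun T' hT' => by simpa [Set.iInter_const] using hindep {()} T' (hT'.trans hT))
  have hVm : ∀ T ⊆ L, MeasurableSet (V T) := fun T hT =>
    hA.compl.inter (measurableSet_biInter T fun i hi => (hB i (hT hi)).compl)
  have h13L : L1 ∪ L3 ⊆ L := union_subset (subset_union_left.trans subset_union_left)
    subset_union_right
  have h23L : L2 ∪ L3 ⊆ L := union_subset (subset_union_right.trans subset_union_left)
    subset_union_right
  have hEc : (A ∪ ((⋃ i ∈ L1, B i) ∩ ⋃ i ∈ L2, B i) ∪ ⋃ i ∈ L3, B i)ᶜ =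
      V (L1 ∪ L3) ∪ V (L2 ∪ L3) := by
    simp only [V, Set.compl_union, Set.compl_inter, Set.compl_iUnion₂, set_biInter_inter]
    ext x
    simp only [Set.mem_union, Set.mem_inter_iff]
    tauto
  have hVV : V (L1 ∪ L3) ∩ V (L2 ∪ L3) = V L := by
    simp only [V, L, set_biInter_inter]
    ext x
    simp only [Set.mem_inter_iff]
    tauto
  have hE := MeasurableSet.of_compl (hEc ▸ (hVm _ h13L).union (hVm _ h23L))
  have hincl := measureReal_union_add_inter (μ := P) (s := V (L1 ∪ L3)) (hVm _ h23L)
  rw [hVV, ← hEc, probReal_compl_eq_one_sub hE, hV _ h13L, hV _ h23L, hV L subset_rfl] at hincl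
  simp only [L, prod_union h13, prod_union h23, prod_union (disjoint_union_left.2 ⟨h13, h23⟩),
    prod_union h12] at hincl
  linear_combination -hincl

theorem stmt_9 {Ω ι : Type*} [MeasurableSpace Ω] [DecidableEq ι]
    (P : Measure Ω) [IsProbabilityMeasure P]
    (A : Set Ω) (hA : MeasurableSet A)
    (L1 L2 L3 : Finset ι) (h1 : L1.Nonempty) (h2 : L2.Nonempty) (h3 : L3.Nonempty)
    (h12 : Disjoint L1 L2) (h13 : Disjoint L1 L3) (h23 : Disjoint L2 L3)
    (B : ι → Set Ω) (hB : ∀ i ∈ L1 ∪ L2 ∪ L3, MeasurableSet (B i))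
    (hindep : ∀ (TA : Finset Unit), ∀ T ⊆ L1 ∪ L2 ∪ L3,
      (P ((⋂ _x ∈ TA, A) ∩ ⋂ i ∈ T, B i)).toReal =
        (∏ _x ∈ TA, (P A).toReal) * ∏ i ∈ T, (P (B i)).toReal) :
    (P (A ∪ ((⋃ i ∈ L1, B i) ∩ ⋃ i ∈ L2, B i) ∪ ⋃ i ∈ L3, B i)).toReal =
      1 - (1 - (P A).toReal) *
        (1 - (1 - ∏ i ∈ L1, (1 - (P (B i)).toReal)) *
             (1 - ∏ i ∈ L2, (1 - (P (B i)).toReal))) *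
        ∏ i ∈ L3, (1 - (P (B i)).toReal) :=
  stmt_9_general P A hA L1 L2 L3 h12 h13 h23 B hB hindep
end

section
/- Let (Ω, P) be a probability space with event A and finite nonempty pairwise-disjoint index sets L₁, L₂, L₃ with events Bᵢ, such that A together with all Bᵢ is mutually independent. Then P(A ∩ ((⋂_{i∈L₁} Bᵢ) ∪ (⋂_{i∈L₂} Bᵢ)) ∩ ⋂_{i∈L₃} Bᵢ) = P(A) · ∏_{i∈L₃} P(Bᵢ) · (1 - (1 - ∏_{i∈L₁} P(Bᵢ)) · (1 - ∏_{i∈L₂} P(Bᵢ))). -/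
/-! Splitting the middle union, the event is `E₁ ∪ E₂` with `Eₖ = A ∩ ⋂_{Lₖ ∪ L₃} Bᵢ` and
`E₁ ∩ E₂ = A ∩ ⋂_{L₁ ∪ L₂ ∪ L₃} Bᵢ`. Inclusion–exclusion together with independence and the
disjointness of the index sets gives `a·p₁·p₃ + a·p₂·p₃ - a·p₁·p₂·p₃`, which is the claimed
formula. -/

open MeasureTheory Finset

section

variable {Ω ι : Type*} [DecidableEq ι]

lemma inter_union_biInter_inter_biInter (A : Set Ω) (B : ι → Set Ω) (s t u : Finset ι) :
    A ∩ ((⋂ i ∈ s, B i) ∪ ⋂ i ∈ t, B i) ∩ ⋂ i ∈ u, B i =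
      (A ∩ ⋂ i ∈ s ∪ u, B i) ∪ (A ∩ ⋂ i ∈ t ∪ u, B i) := by
  rw [set_biInter_inter, set_biInter_inter, Set.inter_union_distrib_left,
    Set.union_inter_distrib_right]
  simp only [Set.inter_assoc]

lemma inter_biInter_inter_inter_biInter (A : Set Ω) (B : ι → Set Ω) (s t : Finset ι) :
    (A ∩ ⋂ i ∈ s, B i) ∩ (A ∩ ⋂ i ∈ t, B i) = A ∩ ⋂ i ∈ s ∪ t, B i := by
  rw [set_biInter_inter, Set.inter_inter_inter_comm, Set.inter_self]

lemma measureReal_inter_biInter_union_inter_biInter [MeasurableSpace Ω] (P : Measure Ω)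
    [IsFiniteMeasure P] {A : Set Ω} (hA : MeasurableSet A) (B : ι → Set Ω) (s : Finset ι)
    {t : Finset ι} (hB : ∀ i ∈ t, MeasurableSet (B i)) :
    P.real ((A ∩ ⋂ i ∈ s, B i) ∪ (A ∩ ⋂ i ∈ t, B i)) =
      P.real (A ∩ ⋂ i ∈ s, B i) + P.real (A ∩ ⋂ i ∈ t, B i) - P.real (A ∩ ⋂ i ∈ s ∪ t, B i) := by
  have hmeas : MeasurableSet (A ∩ ⋂ i ∈ t, B i) :=
    hA.inter (.biInter t.countable_toSet hB)
  rw [← inter_biInter_inter_inter_biInter, ← measureReal_union_add_inter hmeas]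
  ring

end

theorem stmt_10_general {Ω ι : Type*} [MeasurableSpace Ω] [DecidableEq ι]
    (P : Measure Ω) [IsProbabilityMeasure P]
    (A : Set Ω) (hA : MeasurableSet A)
    (L1 L2 L3 : Finset ι)
    (h12 : Disjoint L1 L2) (h13 : Disjoint L1 L3) (h23 : Disjoint L2 L3)
    (B : ι → Set Ω) (hB : ∀ i ∈ L1 ∪ L2 ∪ L3, MeasurableSet (B i))
    (hindep : ∀ (TA : Finset Unit), ∀ T ⊆ L1 ∪ L2 ∪ L3,
      (P ((⋂ _x ∈ TA, A) ∩ ⋂ i ∈ T, B i)).toReal =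
        (∏ _x ∈ TA, (P A).toReal) * ∏ i ∈ T, (P (B i)).toReal) :
    (P (A ∩ ((⋂ i ∈ L1, B i) ∪ ⋂ i ∈ L2, B i) ∩ ⋂ i ∈ L3, B i)).toReal =
      (P A).toReal * (∏ i ∈ L3, (P (B i)).toReal) *
        (1 - (1 - ∏ i ∈ L1, (P (B i)).toReal) * (1 - ∏ i ∈ L2, (P (B i)).toReal)) := by
  simp only [← measureReal_def] at hindep ⊢
  have hpath : ∀ T ⊆ L1 ∪ L2 ∪ L3,
      P.real (A ∩ ⋂ i ∈ T, B i) = P.real A * ∏ i ∈ T, P.real (B i) := fun T hT => by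
    simpa [Set.iInter_const] using hindep {()} T hT
  have h13sub : L1 ∪ L3 ⊆ L1 ∪ L2 ∪ L3 := union_subset_union subset_union_left subset_rfl
  have h23sub : L2 ∪ L3 ⊆ L1 ∪ L2 ∪ L3 := union_subset_union subset_union_right subset_rfl
  rw [inter_union_biInter_inter_biInter,
    measureReal_inter_biInter_union_inter_biInter P hA B _ fun i hi => hB i (h23sub hi),
    ← union_union_distrib_right, hpath _ h13sub, hpath _ h23sub, hpath _ subset_rfl,
    prod_union h13, prod_union h23, prod_union (disjoint_union_left.2 ⟨h13, h23⟩),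
    prod_union h12]
  ring

theorem stmt_10 {Ω ι : Type*} [MeasurableSpace Ω] [DecidableEq ι]
    (P : Measure Ω) [IsProbabilityMeasure P]
    (A : Set Ω) (hA : MeasurableSet A)
    (L1 L2 L3 : Finset ι) (h1 : L1.Nonempty) (h2 : L2.Nonempty) (h3 : L3.Nonempty)
    (h12 : Disjoint L1 L2) (h13 : Disjoint L1 L3) (h23 : Disjoint L2 L3)
    (B : ι → Set Ω) (hB : ∀ i ∈ L1 ∪ L2 ∪ L3, MeasurableSet (B i))
    (hindep : ∀ (TA : Finset Unit), ∀ T ⊆ L1 ∪ L2 ∪ L3,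
      (P ((⋂ _x ∈ TA, A) ∩ ⋂ i ∈ T, B i)).toReal =
        (∏ _x ∈ TA, (P A).toReal) * ∏ i ∈ T, (P (B i)).toReal) :
    (P (A ∩ ((⋂ i ∈ L1, B i) ∪ ⋂ i ∈ L2, B i) ∩ ⋂ i ∈ L3, B i)).toReal =
      (P A).toReal * (∏ i ∈ L3, (P (B i)).toReal) *
        (1 - (1 - ∏ i ∈ L1, (P (B i)).toReal) * (1 - ∏ i ∈ L2, (P (B i)).toReal)) :=
  stmt_10_general P A hA L1 L2 L3 h12 h13 h23 B hB hindep
end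

section
/- Let (Ω, P) be a probability space. Let A be an event, L₁, L₂, L₃, L₄ finite nonempty pairwise-disjoint index sets with events Bᵢ, and L a finite index set with pairs of events C_j, D_j, all mutually independent. Then P(A ∩ (⋂_{i∈L₁}Bᵢ) ∩ ((⋂_{i∈L₂}Bᵢ) ∪ (⋂_{i∈L₃}Bᵢ)) ∩ (⋂_{i∈L₄}Bᵢ) ∩ ⋂_{j∈L}(C_j ∪ D_j)) = P(A) · ∏_{i∈L₁}P(Bᵢ) · (1 - (1-∏_{i∈L₂}P(Bᵢ))·(1-∏_{i∈L₃}P(Bᵢ))) · ∏_{i∈L₄}P(Bᵢ) · ∏_{j∈L}(1 - (1-P(C_j))·(1-P(D_j))). -/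
open MeasureTheory Finset

/-!
Inclusion–exclusion for one parallel pair,
`μ (E ∩ (X ∪ Y)) = μ (E ∩ X) + μ (E ∩ Y) - μ (E ∩ X ∩ Y)`, leaves only intersections of blocks, whose measures factor by independence. The chain of pairs
`C j ∪ D j` is handled one pair at a time by induction on `L`, absorbing the chosen blocks of the
removed pair into the event `E`; the parallel pair of series blocks over `L₂`, `L₃` is then one
more such step.
-/

namespace MeasureTheory

variable {Ω : Type*} [MeasurableSpace Ω] (μ : Measure Ω)

lemma measureReal_inter_union [IsFiniteMeasure μ] {E X Y : Set Ω} (hEY : MeasurableSet (E ∩ Y)) :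
    μ.real (E ∩ (X ∪ Y)) = μ.real (E ∩ X) + μ.real (E ∩ Y) - μ.real (E ∩ X ∩ Y) := by
  have h := measureReal_union_add_inter (μ := μ) (s := E ∩ X) hEY
  have hXY : E ∩ X ∩ (E ∩ Y) = E ∩ X ∩ Y := by
    ext; simp only [Set.mem_inter_iff]; tauto
  rw [hXY, ← Set.inter_union_distrib_left] at h
  linarith

/-- The blocks `C j`, `D j` (`j ∈ L`) multiply like independent events inside `E`; the constant `c`
stands for `μ.real E`. -/
def HasProductFormula {κ : Type*} (C D : κ → Set Ω) (L : Finset κ) (E : Set Ω) (c : ℝ) : Prop :=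
  ∀ U ⊆ L, ∀ V ⊆ L, μ.real (E ∩ (⋂ j ∈ U, C j) ∩ ⋂ j ∈ V, D j) =
    c * (∏ j ∈ U, μ.real (C j)) * ∏ j ∈ V, μ.real (D j)

variable {μ}

lemma HasProductFormula.inter_biInter {κ : Type*} [DecidableEq κ] {C D : κ → Set Ω}
    {L₀ L : Finset κ} {E : Set Ω} {c : ℝ} (h : HasProductFormula μ C D (L₀ ∪ L) E c)
    (hL : Disjoint L₀ L) {U₀ V₀ : Finset κ} (hU₀ : U₀ ⊆ L₀) (hV₀ : V₀ ⊆ L₀) :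
    HasProductFormula μ C D L (E ∩ (⋂ j ∈ U₀, C j) ∩ ⋂ j ∈ V₀, D j)
      (c * (∏ j ∈ U₀, μ.real (C j)) * ∏ j ∈ V₀, μ.real (D j)) := by
  intro U hU V hV
  rw [show E ∩ (⋂ j ∈ U₀, C j) ∩ (⋂ j ∈ V₀, D j) ∩ (⋂ j ∈ U, C j) ∩ ⋂ j ∈ V, D j =
      E ∩ (⋂ j ∈ U₀ ∪ U, C j) ∩ ⋂ j ∈ V₀ ∪ V, D j by simp only [set_biInter_inter]; ac_rfl,
    h _ (union_subset_union hU₀ hU) _ (union_subset_union hV₀ hV),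
    prod_union (hL.mono hU₀ hU), prod_union (hL.mono hV₀ hV)]
  ring

lemma HasProductFormula.measureReal_inter_biInter_union [IsFiniteMeasure μ] {κ : Type*}
    {C D : κ → Set Ω} {L : Finset κ}
    (hC : ∀ j ∈ L, MeasurableSet (C j)) (hD : ∀ j ∈ L, MeasurableSet (D j))
    {E : Set Ω} (hE : MeasurableSet E) {c : ℝ} (h : HasProductFormula μ C D L E c) :
    μ.real (E ∩ ⋂ j ∈ L, (C j ∪ D j)) =
      c * ∏ j ∈ L, (1 - (1 - μ.real (C j)) * (1 - μ.real (D j))) := by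
  classical
  induction L using Finset.induction_on generalizing E c with
  | empty => simpa [HasProductFormula] using h ∅ subset_rfl ∅ subset_rfl
  | insert j L hj ih =>
    set F := ⋂ i ∈ L, (C i ∪ D i)
    have hL : L ⊆ insert j L := subset_insert j L
    have hj' : {j} ⊆ insert j L := singleton_subset_iff.2 (mem_insert_self j L)
    have hF : MeasurableSet F := Finset.measurableSet_biInter L
      fun i hi => (hC i (hL hi)).union (hD i (hL hi))
    have hcond : ∀ U₀ ⊆ {j}, ∀ V₀ ⊆ {j},
        μ.real (E ∩ F ∩ (⋂ i ∈ U₀, C i) ∩ ⋂ i ∈ V₀, D i) = c * (∏ i ∈ U₀, μ.real (C i)) *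
          (∏ i ∈ V₀, μ.real (D i)) * ∏ i ∈ L, (1 - (1 - μ.real (C i)) * (1 - μ.real (D i))) := by
      intro U₀ hU₀ V₀ hV₀
      rw [show E ∩ F ∩ (⋂ i ∈ U₀, C i) ∩ (⋂ i ∈ V₀, D i) =
        E ∩ (⋂ i ∈ U₀, C i) ∩ (⋂ i ∈ V₀, D i) ∩ F by ac_rfl]
      exact ih (fun i hi => hC i (hL hi)) (fun i hi => hD i (hL hi))
        ((hE.inter (Finset.measurableSet_biInter U₀ fun i hi => hC i (hj' (hU₀ hi)))).inter
          (Finset.measurableSet_biInter V₀ fun i hi => hD i (hj' (hV₀ hi))))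
        ((insert_eq j L ▸ h).inter_biInter (disjoint_singleton_left.2 hj) hU₀ hV₀)
    have hCF := hcond {j} subset_rfl ∅ (empty_subset _)
    have hDF := hcond ∅ (empty_subset _) {j} subset_rfl
    have hCDF := hcond {j} subset_rfl {j} subset_rfl
    simp only [set_biInter_singleton, notMem_empty, Set.iInter_of_empty, Set.iInter_univ,
      prod_singleton, prod_empty, Set.inter_univ, mul_one] at hCF hDF hCDF
    rw [set_biInter_insert, prod_insert hj,
      show E ∩ ((C j ∪ D j) ∩ F) = E ∩ F ∩ (C j ∪ D j) by ac_rfl,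
      measureReal_inter_union μ ((hE.inter hF).inter (hD j (mem_insert_self j L))),
      hCF, hDF, hCDF]
    ring

lemma measureReal_inter_biInter_union_biInter [IsFiniteMeasure μ] {ι : Type*} [DecidableEq ι]
    {B : ι → Set Ω} {M N : Finset ι} (hMN : Disjoint M N) (hB : ∀ i ∈ N, MeasurableSet (B i))
    {E : Set Ω} (hE : MeasurableSet E) {c : ℝ}
    (h : ∀ T ⊆ M ∪ N, μ.real (E ∩ ⋂ i ∈ T, B i) = c * ∏ i ∈ T, μ.real (B i)) :
    μ.real (E ∩ ((⋂ i ∈ M, B i) ∪ ⋂ i ∈ N, B i)) =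
      c * (1 - (1 - ∏ i ∈ M, μ.real (B i)) * (1 - ∏ i ∈ N, μ.real (B i))) := by
  rw [measureReal_inter_union μ (hE.inter (Finset.measurableSet_biInter N hB)),
    Set.inter_assoc, ← set_biInter_inter, h M subset_union_left, h N subset_union_right,
    h (M ∪ N) subset_rfl, prod_union hMN]
  ring

end MeasureTheory

theorem stmt_14_general {Ω ι κ : Type*} [MeasurableSpace Ω] [DecidableEq ι]
    (P : Measure Ω) [IsProbabilityMeasure P]
    (A : Set Ω) (hA : MeasurableSet A)
    (L1 L2 L3 L4 : Finset ι)
    (h12 : Disjoint L1 L2) (h13 : Disjoint L1 L3) (h14 : Disjoint L1 L4)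
    (h23 : Disjoint L2 L3) (h24 : Disjoint L2 L4) (h34 : Disjoint L3 L4)
    (B : ι → Set Ω) (hB : ∀ i ∈ L1 ∪ L2 ∪ L3 ∪ L4, MeasurableSet (B i))
    (L : Finset κ) (C D : κ → Set Ω)
    (hCmeas : ∀ j ∈ L, MeasurableSet (C j)) (hDmeas : ∀ j ∈ L, MeasurableSet (D j))
    (hindep : ∀ (TA : Finset Unit), ∀ T ⊆ L1 ∪ L2 ∪ L3 ∪ L4, ∀ U ⊆ L, ∀ V ⊆ L,
      (P ((⋂ _x ∈ TA, A) ∩ (⋂ i ∈ T, B i) ∩ (⋂ j ∈ U, C j) ∩ ⋂ j ∈ V, D j)).toReal =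
        (∏ _x ∈ TA, (P A).toReal) * (∏ i ∈ T, (P (B i)).toReal) *
          (∏ j ∈ U, (P (C j)).toReal) * ∏ j ∈ V, (P (D j)).toReal) :
    (P (A ∩ (⋂ i ∈ L1, B i) ∩ ((⋂ i ∈ L2, B i) ∪ ⋂ i ∈ L3, B i) ∩ (⋂ i ∈ L4, B i) ∩
        ⋂ j ∈ L, (C j ∪ D j))).toReal =
      (P A).toReal * (∏ i ∈ L1, (P (B i)).toReal) *
        (1 - (1 - ∏ i ∈ L2, (P (B i)).toReal) * (1 - ∏ i ∈ L3, (P (B i)).toReal)) *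
        (∏ i ∈ L4, (P (B i)).toReal) *
        ∏ j ∈ L, (1 - (1 - (P (C j)).toReal) * (1 - (P (D j)).toReal)) := by
  simp only [← measureReal_def] at hindep ⊢
  set F := ⋂ j ∈ L, (C j ∪ D j)
  have hF : MeasurableSet F :=
    Finset.measurableSet_biInter L fun j hj => (hCmeas j hj).union (hDmeas j hj)
  have hBT : ∀ T ⊆ L1 ∪ L2 ∪ L3 ∪ L4, MeasurableSet (⋂ i ∈ T, B i) :=
    fun T hT => Finset.measurableSet_biInter T fun i hi => hB i (hT hi)
  have series : ∀ T ⊆ L1 ∪ L2 ∪ L3 ∪ L4, P.real (A ∩ (⋂ i ∈ T, B i) ∩ F) =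
      P.real A * (∏ i ∈ T, P.real (B i)) *
        ∏ j ∈ L, (1 - (1 - P.real (C j)) * (1 - P.real (D j))) := fun T hT =>
    HasProductFormula.measureReal_inter_biInter_union hCmeas hDmeas (hA.inter (hBT T hT))
      fun U hU V hV => by
        simpa only [set_biInter_singleton, prod_singleton] using hindep {()} T hT U hU V hV
  rw [show A ∩ (⋂ i ∈ L1, B i) ∩ ((⋂ i ∈ L2, B i) ∪ ⋂ i ∈ L3, B i) ∩ (⋂ i ∈ L4, B i) ∩ F =
      A ∩ (⋂ i ∈ L1 ∪ L4, B i) ∩ F ∩ ((⋂ i ∈ L2, B i) ∪ ⋂ i ∈ L3, B i) by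
    rw [set_biInter_inter]; ac_rfl,
    measureReal_inter_biInter_union_biInter h23 (fun i hi => hB i (by grind))
      ((hA.inter (hBT _ (by grind))).inter hF)
      (c := P.real A * (∏ i ∈ L1, P.real (B i)) * (∏ i ∈ L4, P.real (B i)) *
        ∏ j ∈ L, (1 - (1 - P.real (C j)) * (1 - P.real (D j)))) fun T hT => ?_]
  · ring
  have hT14 : Disjoint (L1 ∪ L4) T := disjoint_union_left.2
    ⟨(disjoint_union_right.2 ⟨h12, h13⟩).mono_right hT,
      (disjoint_union_right.2 ⟨h24.symm, h34.symm⟩).mono_right hT⟩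
  rw [show A ∩ (⋂ i ∈ L1 ∪ L4, B i) ∩ F ∩ ⋂ i ∈ T, B i = A ∩ (⋂ i ∈ L1 ∪ L4 ∪ T, B i) ∩ F by
      simp only [set_biInter_inter]; ac_rfl,
    series _ (by grind), prod_union hT14, prod_union h14]
  ring

theorem stmt_14 {Ω ι κ : Type*} [MeasurableSpace Ω] [DecidableEq ι]
    (P : Measure Ω) [IsProbabilityMeasure P]
    (A : Set Ω) (hA : MeasurableSet A)
    (L1 L2 L3 L4 : Finset ι)
    (h1 : L1.Nonempty) (h2 : L2.Nonempty) (h3 : L3.Nonempty) (h4 : L4.Nonempty)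
    (h12 : Disjoint L1 L2) (h13 : Disjoint L1 L3) (h14 : Disjoint L1 L4)
    (h23 : Disjoint L2 L3) (h24 : Disjoint L2 L4) (h34 : Disjoint L3 L4)
    (B : ι → Set Ω) (hB : ∀ i ∈ L1 ∪ L2 ∪ L3 ∪ L4, MeasurableSet (B i))
    (L : Finset κ) (C D : κ → Set Ω)
    (hCmeas : ∀ j ∈ L, MeasurableSet (C j)) (hDmeas : ∀ j ∈ L, MeasurableSet (D j))
    (hindep : ∀ (TA : Finset Unit), ∀ T ⊆ L1 ∪ L2 ∪ L3 ∪ L4, ∀ U ⊆ L, ∀ V ⊆ L,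
      (P ((⋂ _x ∈ TA, A) ∩ (⋂ i ∈ T, B i) ∩ (⋂ j ∈ U, C j) ∩ ⋂ j ∈ V, D j)).toReal =
        (∏ _x ∈ TA, (P A).toReal) * (∏ i ∈ T, (P (B i)).toReal) *
          (∏ j ∈ U, (P (C j)).toReal) * ∏ j ∈ V, (P (D j)).toReal) :
    (P (A ∩ (⋂ i ∈ L1, B i) ∩ ((⋂ i ∈ L2, B i) ∪ ⋂ i ∈ L3, B i) ∩ (⋂ i ∈ L4, B i) ∩
        ⋂ j ∈ L, (C j ∪ D j))).toReal =
      (P A).toReal * (∏ i ∈ L1, (P (B i)).toReal) *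
        (1 - (1 - ∏ i ∈ L2, (P (B i)).toReal) * (1 - ∏ i ∈ L3, (P (B i)).toReal)) *
        (∏ i ∈ L4, (P (B i)).toReal) *
        ∏ j ∈ L, (1 - (1 - (P (C j)).toReal) * (1 - (P (D j)).toReal)) :=
  stmt_14_general P A hA L1 L2 L3 L4 h12 h13 h14 h23 h24 h34 B hB L C D hCmeas hDmeas hindep
end
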